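/- Let 1 < α < 2, (α−1)/α < θ < 1, λ ≥ λ₁ > 0, T > 0, 0 < t ≤ T, and let ν₁ satisfy 0 ≤ ν₁ and 1 < θ + ν₁ + 1/α < 2. Then there exists a constant C > 0 depending only on α, θ, ν₁, T, λ₁ such that t^{α-1} · (1 + λ T^α)/(1 + λ t^α) ≤ C · t^{-α(1-θ-ν₁)} · λ^{1/α + ν₁ + θ − 1}. -/
import Mathlib


/-- Abstract estimate: there is `C > 0` (depending only on `α, θ, ν₁, T, λ₁`) with
`t^{α-1} (1+λT^α)/(1+λt^α) ≤ C t^{-α(1-θ-ν₁)} λ^{1/α+ν₁+θ-1}`. -/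
theorem stmt_12 (α θ ν₁ T lam₁ : ℝ)
    (hα1 : 1 < α) (hα2 : α < 2) (hθ1 : (α - 1) / α < θ) (hθ2 : θ < 1)
    (hlam₁ : 0 < lam₁) (hT : 0 < T) (hν₁ : 0 ≤ ν₁)
    (hsum1 : 1 < θ + ν₁ + 1 / α) (hsum2 : θ + ν₁ + 1 / α < 2) :
    ∃ C : ℝ, 0 < C ∧ ∀ lam t : ℝ, lam₁ ≤ lam → 0 < t → t ≤ T →
      t ^ (α - 1) * ((1 + lam * T ^ α) / (1 + lam * t ^ α)) ≤
        C * t ^ (-(α * (1 - θ - ν₁))) * lam ^ (1 / α + ν₁ + θ - 1) := by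
  have hα0 : (0:ℝ) < α := by linarith
  set σ : ℝ := 1 / α + ν₁ + θ - 1 with hσdef
  have hσ0 : 0 < σ := by simp only [hσdef]; linarith
  have hσ1 : σ < 1 := by simp only [hσdef]; linarith
  have hTα : (0:ℝ) < T ^ α := Real.rpow_pos_of_pos hT α
  refine ⟨1 / lam₁ + T ^ α, by positivity, ?_⟩
  intro lam t hlam ht htT
  have hlam0 : 0 < lam := lt_of_lt_of_le hlam₁ hlam
  have htα : (0:ℝ) < t ^ α := Real.rpow_pos_of_pos ht α
  have hx : 0 < lam * t ^ α := by positivity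
  have hxpow : 0 < (lam * t ^ α) ^ (1 - σ) := Real.rpow_pos_of_pos hx _
  have hden : (lam * t ^ α) ^ (1 - σ) ≤ 1 + lam * t ^ α := by
    rcases le_total (lam * t ^ α) 1 with h | h
    · calc (lam * t ^ α) ^ (1 - σ) ≤ (lam * t ^ α) ^ (0:ℝ) :=
            Real.rpow_le_rpow_of_exponent_ge hx h (by linarith)
        _ = 1 := Real.rpow_zero _
        _ ≤ 1 + lam * t ^ α := by linarith
    · calc (lam * t ^ α) ^ (1 - σ) ≤ (lam * t ^ α) ^ (1:ℝ) :=
            Real.rpow_le_rpow_of_exponent_le h (by linarith)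
        _ = lam * t ^ α := Real.rpow_one _
        _ ≤ 1 + lam * t ^ α := by linarith
  have h1 : 1 ≤ lam * (1 / lam₁) := by
    rw [mul_one_div]; exact (one_le_div hlam₁).mpr hlam
  have hnum : 1 + lam * T ^ α ≤ (1 / lam₁ + T ^ α) * lam := by nlinarith
  have hstep : t ^ (α - 1) * ((1 + lam * T ^ α) / (1 + lam * t ^ α)) ≤
      t ^ (α - 1) * (((1 / lam₁ + T ^ α) * lam) / ((lam * t ^ α) ^ (1 - σ))) := by
    apply mul_le_mul_of_nonneg_left _ (Real.rpow_pos_of_pos ht _).le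
    exact div_le_div₀ (by positivity) hnum hxpow hden
  refine hstep.trans (le_of_eq ?_)
  have hexp : (α - 1) + α * (σ - 1) = -(α * (1 - θ - ν₁)) := by
    have hαne : α ≠ 0 := ne_of_gt hα0
    simp only [hσdef]
    field_simp
    ring
  have hlamexp : (1:ℝ) + (σ - 1) = σ := by ring
  calc t ^ (α - 1) * (((1 / lam₁ + T ^ α) * lam) / ((lam * t ^ α) ^ (1 - σ)))
      = t ^ (α - 1) * (((1 / lam₁ + T ^ α) * lam) * (lam * t ^ α) ^ (σ - 1)) := by
        rw [div_eq_mul_inv, ← Real.rpow_neg hx.le]; ring_nf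
    _ = t ^ (α - 1) * (((1 / lam₁ + T ^ α) * lam) * (lam ^ (σ - 1) * t ^ (α * (σ - 1)))) := by
        rw [Real.mul_rpow hlam0.le htα.le, ← Real.rpow_mul ht.le]
    _ = (1 / lam₁ + T ^ α) * (t ^ (α - 1) * t ^ (α * (σ - 1))) * (lam ^ (1:ℝ) * lam ^ (σ - 1)) := by
        rw [Real.rpow_one]; ring
    _ = (1 / lam₁ + T ^ α) * t ^ (-(α * (1 - θ - ν₁))) * lam ^ σ := by
        rw [← Real.rpow_add ht, ← Real.rpow_add hlam0, hexp, hlamexp]
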